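/- arXiv:1412.8692 — 4 statements merged into one kernel-verified Lean document; each statement's English description precedes it below -/
import Mathlib

section
/- With the setup of the Galois connection (C, V) between relations on Hom_T(t,Δ) and subobjects of I(t): fix a relation R on Hom_T(t,Δ), and let Σ = {σ_i}_{i∈I} be a family of subobjects of I(t) such that each σ_i factors as σ_i = V(R)∘m_i and the family {m_i} is jointly epic in S. Then R = C(V(R)) if and only if R = ⋂_{i∈I} C(σ_i). -/
open CategoryTheory CategoryTheory.Limits

universe w v u v' u'

/-- Weak Nullstellensatz: given a relation `R` on `Hom_T(t,Δ)` and a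
jointly epic family of factorisations `m i` of subobjects `σ i` through `V(R)`,
`R = C(V(R))` iff `R = ⋂ i, C(σ i)`. -/
theorem stmt_1 {T : Type u} [Category.{v} T] {S : Type u'} [Category.{v'} S]
    (I : T ⥤ S) (Δ : T)
    [HasEqualizers S] [WellPowered.{v'} S] [HasWidePullbacks.{v'} S]
    (t : T) (R : Set ((t ⟶ Δ) × (t ⟶ Δ)))
    -- the subobject `V(R)`
    (VR : Subobject (I.obj t))
    (hVR : VR = sInf {P : Subobject (I.obj t) |
        ∃ pq ∈ R, P = Subobject.mk (equalizer.ι (I.map pq.1) (I.map pq.2))})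
    -- the family `Σ = {σ i}` of subobjects of `I.obj t`, with factorisations `m i`
    (ι : Type w) (σ : ι → Subobject (I.obj t))
    (m : ∀ i : ι, ((σ i : S) ⟶ (VR : S)))
    (hm : ∀ i : ι, (σ i).arrow = m i ≫ VR.arrow)
    -- the family `{m i}` is jointly epic in `S`
    (hepi : ∀ {Z : S} (f g : (VR : S) ⟶ Z), (∀ i : ι, m i ≫ f = m i ≫ g) → f = g) :
    (R = {pq : (t ⟶ Δ) × (t ⟶ Δ) | VR.arrow ≫ I.map pq.1 = VR.arrow ≫ I.map pq.2}) ↔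
      R = ⋂ i : ι, {pq : (t ⟶ Δ) × (t ⟶ Δ) |
        (σ i).arrow ≫ I.map pq.1 = (σ i).arrow ≫ I.map pq.2} := by
  have key : {pq : (t ⟶ Δ) × (t ⟶ Δ) | VR.arrow ≫ I.map pq.1 = VR.arrow ≫ I.map pq.2} =
      ⋂ i : ι, {pq : (t ⟶ Δ) × (t ⟶ Δ) |
        (σ i).arrow ≫ I.map pq.1 = (σ i).arrow ≫ I.map pq.2} := by
    ext pq
    simp only [Set.mem_setOf_eq, Set.mem_iInter]
    constructor
    · intro h i
      rw [hm i, Category.assoc, Category.assoc, h]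
    · intro h
      exact hepi _ _ (fun i => by
        have := h i
        rw [hm i, Category.assoc, Category.assoc] at this
        exact this)
  rw [key]
end

section
/- Let V be a finitary variety, A an algebra in V, and suppose that for every congruence θ on every free algebra F(μ) one has C(V(θ)) = θ (i.e., the composition C∘V relative to A fixes the whole variety). Then A contains, up to isomorphism, every subdirectly irreducible algebra of V as a subalgebra; conversely, if A contains all subdirectly irreducible algebras up to isomorphism, then C(V(θ)) = θ holds for every congruence θ on every F(μ). -/
universe u v w x

/-- A (possibly infinitary) algebraic signature: a type of operation symbols
together with an arity (an arbitrary type) for each. -/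
structure Sig : Type (u + 1) where
  Op : Type u
  ar : Op → Type u

/-- An algebra structure for the signature `σ` on the type `α`. -/
def SigStr (σ : Sig.{u}) (α : Type v) : Type (max u v) :=
  ∀ o : σ.Op, (σ.ar o → α) → α

/-- `f` is a homomorphism of `σ`-algebras. -/
def IsHom (σ : Sig.{u}) {α : Type v} {β : Type w} (Aa : SigStr σ α) (Bb : SigStr σ β)
    (f : α → β) : Prop :=
  ∀ (o : σ.Op) (z : σ.ar o → α), f (Aa o z) = Bb o fun i => f (z i)

/-- A congruence on a `σ`-algebra: an equivalence relation compatible with all the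
operations (hence with all term-definable operations). -/
def IsCong (σ : Sig.{u}) {α : Type v} (Aa : SigStr σ α) (r : α → α → Prop) : Prop :=
  Equivalence r ∧ ∀ (o : σ.Op) (z₁ z₂ : σ.ar o → α),
    (∀ i, r (z₁ i) (z₂ i)) → r (Aa o z₁) (Aa o z₂)

/-- A bundled `σ`-algebra. -/
structure SigAlg (σ : Sig.{u}) : Type (max u (v + 1)) where
  carrier : Type v
  op : SigStr σ carrier

/-- The direct product of a family of `σ`-algebras. -/
def prodAlg (σ : Sig.{u}) {ι : Type v} (B : ι → SigAlg.{u, v} σ) : SigAlg.{u, v} σ where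
  carrier := ∀ i : ι, (B i).carrier
  op := fun o z i => (B i).op o fun j => z j i

/-- A class of `σ`-algebras closed under homomorphic images, subalgebras
(isomorphic copies of embedded algebras) and direct products: a variety. -/
def ClosedHSP (σ : Sig.{u}) (K : SigAlg.{u, v} σ → Prop) : Prop :=
  (∀ A B : SigAlg.{u, v} σ, K A →
      (∃ f : A.carrier → B.carrier, IsHom σ A.op B.op f ∧ Function.Surjective f) → K B) ∧
    (∀ A B : SigAlg.{u, v} σ, K A →
      (∃ f : B.carrier → A.carrier, IsHom σ B.op A.op f ∧ Function.Injective f) → K B) ∧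
    ∀ (ι : Type v) (B : ι → SigAlg.{u, v} σ), (∀ i, K (B i)) → K (prodAlg σ B)

/-- A subdirectly irreducible algebra: a nontrivial algebra with a smallest
nontrivial congruence (equivalently, whenever it embeds subdirectly into a product,
some projection restricts to an isomorphism). -/
def SubdirIrrAlg (σ : Sig.{u}) (B : SigAlg.{u, v} σ) : Prop :=
  Nontrivial B.carrier ∧
    ∃ m : B.carrier → B.carrier → Prop, IsCong σ B.op m ∧ m ≠ (· = ·) ∧
      ∀ r : B.carrier → B.carrier → Prop, IsCong σ B.op r → r ≠ (· = ·) →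
        ∀ x y, m x y → r x y

/-- A simple algebra: nontrivial, with no congruences besides equality and the
total relation. -/
def SimpleAlg (σ : Sig.{u}) (B : SigAlg.{u, v} σ) : Prop :=
  Nontrivial B.carrier ∧
    ∀ r : B.carrier → B.carrier → Prop, IsCong σ B.op r →
      r = (· = ·) ∨ r = fun _ _ => True

/-!
If `C ∘ V` fixes every congruence, let `B` be subdirectly irreducible with monolith
`m ∋ (x, y)`, `x ≠ y`, and let `θ` be the kernel of the canonical map `Fr B → B`. The
pair `(η x, η y)` lies outside `θ = C (V θ)`, so some assignment `a` into `A` respects `θ`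
but separates it; the induced map `B → A` is a homomorphism whose kernel misses `(x, y)`,
hence misses the monolith, hence is trivial.

Conversely, if `(p, q) ∉ θ`, extend `θ` by Zorn's lemma (chains of congruences have
congruences as unions because the operations are finitary) to a congruence `ψ` maximal
among those avoiding `(p, q)`. Every nontrivial congruence of `Fr μ / ψ` relates `[p]` and
`[q]`, so the quotient is subdirectly irreducible and embeds in `A`; the embedding, read on
generators, is an assignment in `V θ` separating `p` from `q`.
-/

open Function

section Congruences

variable {σ : Sig.{u}} {α : Type v} {β : Type w} {γ : Type x}
  {Aa : SigStr σ α} {Bb : SigStr σ β} {Cc : SigStr σ γ}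

theorem IsHom.comp {f : α → β} {g : β → γ} (hg : IsHom σ Bb Cc g) (hf : IsHom σ Aa Bb f) :
    IsHom σ Aa Cc (g ∘ f) := fun o z => by
  simp only [comp_apply, hf o z, hg o]

theorem isCong_eq : IsCong σ Aa (· = ·) :=
  ⟨⟨fun _ => rfl, Eq.symm, Eq.trans⟩, fun o _ _ h => congrArg (Aa o) (funext h)⟩

theorem IsCong.comap {f : α → β} {r : β → β → Prop} (hf : IsHom σ Aa Bb f)
    (hr : IsCong σ Bb r) : IsCong σ Aa fun x y => r (f x) (f y) :=
  ⟨⟨fun _ => hr.1.refl _, hr.1.symm, hr.1.trans⟩, fun o z₁ z₂ h => by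
    simpa only [hf o] using hr.2 o _ _ h⟩

theorem isCong_ker {f : α → β} (hf : IsHom σ Aa Bb f) : IsCong σ Aa fun x y => f x = f y :=
  isCong_eq.comap hf

theorem exists_rel_ne_of_ne_eq {r : α → α → Prop} (hr : ∀ x, r x x) (hne : r ≠ (· = ·)) :
    ∃ x y, r x y ∧ x ≠ y := by
  by_contra! h
  exact hne (funext₂ fun x y => propext ⟨h x y, fun hxy => hxy ▸ hr x⟩)

theorem exists_isHom_comp_eq {h : α → β} {g : α → γ} (hh : IsHom σ Aa Bb h)
    (h_surj : Surjective h) (hg : IsHom σ Aa Cc g) (hker : ∀ u v, h u = h v → g u = g v) :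
    ∃ f : β → γ, IsHom σ Bb Cc f ∧ ∀ u, f (h u) = g u := by
  have hfac : ∀ u, g (surjInv h_surj (h u)) = g u := fun u => hker _ _ (surjInv_eq h_surj _)
  refine ⟨g ∘ surjInv h_surj, fun o z => ?_, hfac⟩
  obtain ⟨w, rfl⟩ : ∃ w, (fun i => h (w i)) = z :=
    ⟨surjInv h_surj ∘ z, funext fun i => surjInv_eq h_surj _⟩
  rw [comp_apply, ← hh o, hfac, hg o]
  simp only [comp_apply, hfac]

theorem injective_of_monolith_rel {m : α → α → Prop}
    (hm : ∀ r, IsCong σ Aa r → r ≠ (· = ·) → ∀ x y, m x y → r x y)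
    {x y : α} (hxy : m x y) {f : α → β} (hf : IsHom σ Aa Bb f) (hfxy : f x ≠ f y) :
    Injective f := by
  by_contra hf_inj
  exact hfxy (hm _ (isCong_ker hf) (fun h => hf_inj fun u v => (congrFun₂ h u v).mp) x y hxy)

theorem subdirIrrAlg_of_forall_rel (B : SigAlg.{u, v} σ) {x y : B.carrier} (hxy : x ≠ y)
    (h : ∀ r, IsCong σ B.op r → r ≠ (· = ·) → r x y) : SubdirIrrAlg σ B := by
  let m := fun u v => ∀ r, IsCong σ B.op r → r ≠ (· = ·) → r u v
  refine ⟨⟨x, y, hxy⟩, m, ⟨⟨fun u r hr _ => hr.1.refl u, ?_, ?_⟩, ?_⟩, ?_, ?_⟩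
  · exact fun huv r hr hne => hr.1.symm (huv r hr hne)
  · exact fun huv hvw r hr hne => hr.1.trans (huv r hr hne) (hvw r hr hne)
  · exact fun o _ _ hz r hr hne => hr.2 o _ _ fun i => hz i r hr hne
  · exact fun hm => hxy (cast (congrFun₂ hm x y) h)
  · exact fun r hr hne u v hm => hm r hr hne

noncomputable def quotOp (Aa : SigStr σ α) (ψ : α → α → Prop) : SigStr σ (Quot ψ) :=
  fun o z => Quot.mk ψ (Aa o fun i => (z i).out)

theorem isHom_quotMk {ψ : α → α → Prop} (hψ : IsCong σ Aa ψ) :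
    IsHom σ Aa (quotOp Aa ψ) (Quot.mk ψ) := fun o _ =>
  Quot.sound <| hψ.2 o _ _ fun _ => (hψ.1.quot_mk_eq_iff _ _).1 (Quot.out_eq _).symm

theorem subdirIrrAlg_quot_of_maximal {ψ : α → α → Prop} {p q : α}
    (hψ : Maximal (fun r => IsCong σ Aa r ∧ ¬ r p q) ψ) :
    SubdirIrrAlg σ ⟨Quot ψ, quotOp Aa ψ⟩ := by
  have hmk := isHom_quotMk hψ.1.1
  refine subdirIrrAlg_of_forall_rel _ (x := Quot.mk ψ p) (y := Quot.mk ψ q)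
    (fun h => hψ.1.2 ((hψ.1.1.1.quot_mk_eq_iff _ _).1 h)) fun r hr hne => ?_
  by_contra hpq
  -- the pullback of `r` is a congruence above `ψ` still avoiding `(p, q)`, so it is `ψ`
  have hle : ψ ≤ fun u v => r (Quot.mk ψ u) (Quot.mk ψ v) := fun u v huv => by
    change r _ _
    rw [Quot.sound huv]
    exact hr.1.refl _
  have hge := hψ.2 ⟨hr.comap hmk, hpq⟩ hle
  refine hne (funext₂ fun c d => propext ⟨fun hcd => ?_, fun h => h ▸ hr.1.refl _⟩)
  induction c using Quot.ind
  induction d using Quot.ind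
  exact Quot.sound (hge _ _ hcd)

variable [∀ o : σ.Op, Finite (σ.ar o)]

theorem IsChain.isCong_exists_mem {c : Set (α → α → Prop)} (hc : IsChain (· ≤ ·) c)
    (hcong : ∀ r ∈ c, IsCong σ Aa r) {r₀ : α → α → Prop} (hr₀ : r₀ ∈ c) :
    IsCong σ Aa fun x y => ∃ r ∈ c, r x y := by
  refine ⟨⟨fun x => ⟨r₀, hr₀, (hcong r₀ hr₀).1.refl x⟩, ?_, ?_⟩, ?_⟩
  · rintro x y ⟨r, hr, hxy⟩
    exact ⟨r, hr, (hcong r hr).1.symm hxy⟩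
  · rintro x y z ⟨r, hr, hxy⟩ ⟨s, hs, hyz⟩
    obtain ⟨t, ht, hrt, hst⟩ := hc.directedOn r hr s hs
    exact ⟨t, ht, (hcong t ht).1.trans (hrt x y hxy) (hst y z hyz)⟩
  · intro o z₁ z₂ hz
    choose r hr hrz using hz
    have : Nonempty c := ⟨⟨r₀, hr₀⟩⟩
    obtain ⟨t, ht⟩ := hc.directedOn.directed_val.finite_le fun i => (⟨r i, hr i⟩ : c)
    exact ⟨t, t.2, (hcong t t.2).2 o _ _ fun i => ht i _ _ (hrz i)⟩

theorem exists_maximal_isCong_not_rel {θ : α → α → Prop} (hθ : IsCong σ Aa θ) {p q : α}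
    (hpq : ¬ θ p q) : ∃ ψ, θ ≤ ψ ∧ Maximal (fun r => IsCong σ Aa r ∧ ¬ r p q) ψ := by
  refine zorn_le_nonempty₀ _ (fun c hc hchain r₀ hr₀ => ?_) θ ⟨hθ, hpq⟩
  refine ⟨fun x y => ∃ r ∈ c, r x y, ⟨?_, ?_⟩, fun r hr x y hxy => ⟨r, hr, hxy⟩⟩
  · exact hchain.isCong_exists_mem (fun r hr => (hc hr).1) hr₀
  · rintro ⟨r, hr, hpq⟩
    exact (hc hr).2 hpq

end Congruences

/-- for a finitary variety `K` with free algebras `Fr μ` and a fixed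
algebra `A` in `K`, the operator `C∘V` (relative to `A`) fixes every congruence on
every free algebra if, and only if, `A` contains (up to isomorphism) every
subdirectly irreducible algebra of `K` as a subalgebra. -/
theorem stmt_10 (σ : Sig.{u}) [∀ o : σ.Op, Finite (σ.ar o)]
    (K : SigAlg.{u, v} σ → Prop) (hvar : ClosedHSP σ K)
    (A : SigAlg.{u, v} σ) (hA : K A)
    (Fr : Type v → SigAlg.{u, v} σ) (η : ∀ μ : Type v, μ → (Fr μ).carrier)
    (hFrK : ∀ μ : Type v, K (Fr μ))
    (hfree : ∀ (μ : Type v) (B : SigAlg.{u, v} σ), K B → ∀ a : μ → B.carrier,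
      ∃! g : (Fr μ).carrier → B.carrier,
        IsHom σ (Fr μ).op B.op g ∧ ∀ β : μ, g (η μ β) = a β)
    (ext : ∀ μ : Type v, (μ → A.carrier) → (Fr μ).carrier → A.carrier)
    (hexthom : ∀ (μ : Type v) (a : μ → A.carrier), IsHom σ (Fr μ).op A.op (ext μ a))
    (hextη : ∀ (μ : Type v) (a : μ → A.carrier) (β : μ), ext μ a (η μ β) = a β) :
    (∀ (μ : Type v) (θ : (Fr μ).carrier → (Fr μ).carrier → Prop),
        IsCong σ (Fr μ).op θ →
          ∀ p q : (Fr μ).carrier, θ p q ↔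
            ∀ a : μ → A.carrier,
              (∀ p' q', θ p' q' → ext μ a p' = ext μ a q') → ext μ a p = ext μ a q) ↔
      ∀ B : SigAlg.{u, v} σ, K B → SubdirIrrAlg σ B →
        ∃ f : B.carrier → A.carrier, IsHom σ B.op A.op f ∧ Function.Injective f := by
  constructor
  · intro hCV B hB ⟨_, m, hm, hm_ne, hm_min⟩
    obtain ⟨x, y, hxy, hne⟩ := exists_rel_ne_of_ne_eq hm.1.refl hm_ne
    obtain ⟨h, ⟨hh, hhη⟩, -⟩ := hfree B.carrier B hB id
    obtain ⟨a, ha_ker, ha_ne⟩ : ∃ a, (∀ p q, h p = h q → ext _ a p = ext _ a q) ∧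
        ext _ a (η _ x) ≠ ext _ a (η _ y) := by
      by_contra! H
      exact hne (by simpa only [hhη, id] using (hCV _ _ (isCong_ker hh) (η _ x) (η _ y)).2 H)
    obtain ⟨f, hf, hfh⟩ :=
      exists_isHom_comp_eq hh (fun b => ⟨η _ b, hhη b⟩) (hexthom _ a) ha_ker
    refine ⟨f, hf, injective_of_monolith_rel hm_min hxy hf ?_⟩
    simpa only [← hfh, hhη, id] using ha_ne
  · intro hemb μ θ hθ p q
    refine ⟨fun hpq a ha => ha p q hpq, fun hC => by_contra fun hpq => ?_⟩
    obtain ⟨ψ, hθψ, hψ⟩ := exists_maximal_isCong_not_rel hθ hpq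
    let Q : SigAlg σ := ⟨Quot ψ, quotOp (Fr μ).op ψ⟩
    have hmk : IsHom σ (Fr μ).op Q.op (Quot.mk ψ) := isHom_quotMk hψ.1.1
    obtain ⟨f, hf, hf_inj⟩ := hemb Q (hvar.1 _ Q (hFrK μ) ⟨_, hmk, Quot.mk_surjective⟩)
      (subdirIrrAlg_quot_of_maximal hψ)
    have hext : ext μ (fun β => f (Quot.mk ψ (η μ β))) = f ∘ Quot.mk ψ :=
      (hfree μ A hA _).unique ⟨hexthom μ _, hextη μ _⟩ ⟨hf.comp hmk, fun _ => rfl⟩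
    have hfpq := hC _ fun p' q' h => by
      rw [hext]; exact congrArg f (Quot.sound (hθψ p' q' h))
    rw [hext] at hfpq
    exact hψ.1.2 ((hψ.1.1.1.quot_mk_eq_iff _ _).1 (hf_inj hfpq))
end

section
/- Ring-theoretic Nullstellensatz (radical-as-intersection form): let k be an algebraically closed field and I an ideal of k[X₁,…,Xₙ]. Then I(V(I)) = I (where V(I) ⊆ kⁿ is the zero set of I and I(S) the ideal of polynomials vanishing on S ⊆ kⁿ) if and only if I is an intersection of maximal ideals of k[X₁,…,Xₙ]. -/
/-!
By Hilbert's Nullstellensatz `I(V(I))` is the radical of `I`, so the left-hand side says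
exactly that `I` is a radical ideal. As `k[X₁,…,Xₙ]` is a Jacobson ring, a radical ideal is its
own Jacobson radical, the intersection of the maximal ideals containing it; conversely every
intersection of prime ideals is radical.
-/

namespace Ideal

variable {R : Type*} [CommRing R]

theorem isRadical_sInf_of_isPrime {M : Set (Ideal R)} (hM : ∀ J ∈ M, J.IsPrime) :
    (sInf M).IsRadical := by
  rw [sInf_eq_iInf]
  exact isRadical_iInf _ fun J ↦ isRadical_iInf _ fun hJ ↦ (hM J hJ).isRadical

theorem isRadical_iff_exists_eq_sInf_isMaximal [IsJacobsonRing R] {I : Ideal R} :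
    I.IsRadical ↔ ∃ M : Set (Ideal R), (∀ J ∈ M, J.IsMaximal) ∧ I = sInf M := by
  constructor
  · intro hI
    exact ⟨{J | I ≤ J ∧ J.IsMaximal}, fun J hJ ↦ hJ.2, (IsJacobsonRing.out ‹_› hI).symm⟩
  · rintro ⟨M, hM, rfl⟩
    exact isRadical_sInf_of_isPrime fun J hJ ↦ (hM J hJ).isPrime

end Ideal

namespace MvPolynomial

theorem forall_mem_zeroLocus_eval_eq_zero_iff_mem_radical {k σ : Type*} [Field k]
    [IsAlgClosed k] [Finite σ] {I : Ideal (MvPolynomial σ k)} {p : MvPolynomial σ k} :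
    (∀ a ∈ zeroLocus k I, eval a p = 0) ↔ p ∈ I.radical := by
  rw [← vanishingIdeal_zeroLocus_eq_radical (K := k), mem_vanishingIdeal_iff]
  simp only [aeval_eq_eval]

end MvPolynomial

/-- ring-theoretic Nullstellensatz, radical-as-intersection form:
for an ideal `I` of `k[X₁,…,Xₙ]` over an algebraically closed field `k`,
`I(V(I)) = I` iff `I` is an intersection of maximal ideals. -/
theorem stmt_15 {k : Type*} [Field k] [IsAlgClosed k] (n : ℕ)
    (I : Ideal (MvPolynomial (Fin n) k)) :
    (∀ p : MvPolynomial (Fin n) k,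
        (∀ a ∈ {a : Fin n → k | ∀ q ∈ I, MvPolynomial.eval a q = 0},
          MvPolynomial.eval a p = 0) ↔ p ∈ I) ↔
      ∃ M : Set (Ideal (MvPolynomial (Fin n) k)),
        (∀ J ∈ M, J.IsMaximal) ∧ I = sInf M := by
  have hV : ∀ p : MvPolynomial (Fin n) k,
      (∀ a ∈ {a : Fin n → k | ∀ q ∈ I, MvPolynomial.eval a q = 0},
        MvPolynomial.eval a p = 0) ↔ p ∈ I.radical :=
    fun _ ↦ MvPolynomial.forall_mem_zeroLocus_eval_eq_zero_iff_mem_radical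
  simp_rw [hV, ← SetLike.ext_iff, Ideal.radical_eq_iff]
  exact Ideal.isRadical_iff_exists_eq_sInf_isMaximal
end

section
/- For any cardinal μ, a subset S ⊆ {0,1}^μ is closed in the product topology ({0,1} discrete) if and only if S equals the set of common solutions of the set of all pairs of Boolean terms in μ variables that agree on S; that is, V(C(S)) = S, where C(S) is the set of pairs of elements of the free Boolean algebra F(μ) agreeing on all points of S, and V(C(S)) is the set of points of {0,1}^μ on which all pairs in C(S) agree. -/
universe u

/-- Boolean terms in variables from `μ`: the elements of the free Boolean algebra
on `μ` generators are represented by such terms. -/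
inductive BTerm (μ : Type u) : Type u
  | var : μ → BTerm μ
  | bot : BTerm μ
  | top : BTerm μ
  | sup : BTerm μ → BTerm μ → BTerm μ
  | inf : BTerm μ → BTerm μ → BTerm μ
  | compl : BTerm μ → BTerm μ

/-- Evaluation of a Boolean term at a point of `{0,1}^μ`. -/
def BTerm.eval {μ : Type u} (a : μ → Bool) : BTerm μ → Bool
  | .var β => a β
  | .bot => false
  | .top => true
  | .sup p q => p.eval a || q.eval a
  | .inf p q => p.eval a && q.eval a
  | .compl p => ! p.eval a

lemma BTerm.continuous_eval {μ : Type u} (t : BTerm μ) :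
    Continuous fun a : μ → Bool => t.eval a := by
  induction t with
  | var β => exact continuous_apply β
  | bot => exact continuous_const
  | top => exact continuous_const
  | sup p q hp hq =>
      exact (continuous_of_discreteTopology (f := fun x : Bool × Bool => x.1 || x.2)).comp
        (hp.prodMk hq)
  | inf p q hp hq =>
      exact (continuous_of_discreteTopology (f := fun x : Bool × Bool => x.1 && x.2)).comp
        (hp.prodMk hq)
  | compl p hp =>
      exact (continuous_of_discreteTopology (f := fun x : Bool => !x)).comp hp

/-- A literal fixing the value of variable `β` to `a β`. -/
def lit {μ : Type u} (a : μ → Bool) (β : μ) : BTerm μ :=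
  if a β then .var β else .compl (.var β)

/-- Conjunction of literals over a list of variables. -/
def conj {μ : Type u} (a : μ → Bool) : List μ → BTerm μ
  | [] => .top
  | β :: l => .inf (lit a β) (conj a l)

lemma conj_eval {μ : Type u} (a : μ → Bool) (l : List μ) (b : μ → Bool) :
    (conj a l).eval b = true ↔ ∀ β ∈ l, b β = a β := by
  induction l with
  | nil => simp [conj, BTerm.eval]
  | cons β l ih =>
      simp only [conj, BTerm.eval, Bool.and_eq_true, ih, List.mem_cons]
      constructor
      · rintro ⟨h1, h2⟩ γ (rfl | hγ)
        · unfold lit at h1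
          by_cases h : a γ <;> simp [h, BTerm.eval] at h1 <;> simp [h1, h]
        · exact h2 γ hγ
      · intro h
        refine ⟨?_, fun γ hγ => h γ (Or.inr hγ)⟩
        have := h β (Or.inl rfl)
        unfold lit
        by_cases hb : a β <;> simp [hb, BTerm.eval, this]

/-- a subset `S ⊆ {0,1}^μ` is closed in the product topology
(`{0,1}` discrete) iff `V(C(S)) = S`, where `C(S)` is the set of pairs of Boolean
terms in `μ` variables agreeing on `S`, and `V(C(S))` is its common solution set. -/
theorem stmt_17 (μ : Type u) (S : Set (μ → Bool)) :
    IsClosed S ↔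
      {a : μ → Bool | ∀ p q : BTerm μ,
        (∀ b ∈ S, p.eval b = q.eval b) → p.eval a = q.eval a} = S := by
  constructor
  · intro hS
    apply Set.Subset.antisymm
    · intro a ha
      by_contra haS
      have : a ∈ Sᶜ := haS
      rw [← isOpen_compl_iff, isOpen_pi_iff] at hS
      obtain ⟨I, u, hu, hsub⟩ := hS a this
      -- points agreeing with a on I lie in Sᶜ
      have key : ∀ b ∈ S, (conj a I.toList).eval b = false := by
        intro b hb
        by_contra h
        have h' : (conj a I.toList).eval b = true := by
          cases hbe : (conj a I.toList).eval b
          · exact absurd hbe h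
          · rfl
        rw [conj_eval] at h'
        have : b ∈ (↑I : Set μ).pi u := by
          intro i hi
          rw [h' i (Finset.mem_toList.mpr hi)]
          exact (hu i hi).2
        exact hsub this hb
      have := ha (conj a I.toList) .bot (fun b hb => by simp [BTerm.eval, key b hb])
      simp only [BTerm.eval] at this
      have htrue : (conj a I.toList).eval a = true :=
        (conj_eval a I.toList a).mpr (fun β _ => rfl)
      rw [htrue] at this
      simp at this
    · intro a ha p q h
      exact h a ha
  · intro h
    rw [← h]
    have : {a : μ → Bool | ∀ p q : BTerm μ,
        (∀ b ∈ S, p.eval b = q.eval b) → p.eval a = q.eval a}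
        = ⋂ (pq : {pq : BTerm μ × BTerm μ // ∀ b ∈ S, pq.1.eval b = pq.2.eval b}),
          {a | pq.1.1.eval a = pq.1.2.eval a} := by
      ext a
      simp only [Set.mem_setOf_eq, Set.mem_iInter, Subtype.forall, Prod.forall]
    rw [this]
    exact isClosed_iInter fun pq =>
      isClosed_eq pq.1.1.continuous_eval pq.1.2.continuous_eval
end
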